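/- For every t > 0 and r > 0, the Gruet kernels satisfy Milson's recursion linking dimensions 2 and 4: p_4(t,r) = -(e^{-t} / (2π sinh(r))) · ∂p_2/∂r (t,r); in particular the function r ↦ p_2(t,r) is differentiable on (0,∞) and its derivative equals -2π e^{t} sinh(r) p_4(t,r). -/

import Mathlib

/-!
Differentiating under the integral sign in `r` is legitimate because, for exponents `p ≥ 1`,
`|sinh b| ≤ cosh b ≤ (cosh b + cosh r) ^ p`, so the integrand is dominated by the Gaussian
`exp ((π² - b²) / (2t))`. Differentiation turns `(cosh b + cosh r) ^ (-(n + 1) / 2)` into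
`-(n + 1) / 2 · sinh r · (cosh b + cosh r) ^ (-(n + 3) / 2)`, i.e. the integral of `p_{n+2}`,
and the functional equation `Γ(s + 1) = s Γ(s)` matches the normalising constants; this is
Milson's recursion `∂ᵣ p_n = -2π e^{nt/2} sinh r · p_{n+2}`, of which the theorem is `n = 2`.
-/

open Real MeasureTheory

/-- The Gruet kernel `p_n(t,r)` for the heat semigroup on hyperbolic space `ℍ^n`. -/
noncomputable def gruet (n : ℕ) (t r : ℝ) : ℝ :=
  Real.exp (-((n : ℝ) - 1) ^ 2 * t / 8) / (π * (2 * π) ^ ((n : ℝ) / 2) * Real.sqrt t) *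
    Real.Gamma (((n : ℝ) + 1) / 2) *
    ∫ b in Set.Ioi (0 : ℝ),
      Real.exp ((π ^ 2 - b ^ 2) / (2 * t)) * Real.sinh b * Real.sin (π * b / t) /
        (Real.cosh b + Real.cosh r) ^ (((n : ℝ) + 1) / 2)

open Set

noncomputable def gruetWeight (t b : ℝ) : ℝ :=
  exp ((π ^ 2 - b ^ 2) / (2 * t)) * sinh b * sin (π * b / t)

noncomputable def gruetIntegral (p t ρ : ℝ) : ℝ :=
  ∫ b in Ioi (0 : ℝ), gruetWeight t b / (cosh b + cosh ρ) ^ p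

noncomputable def gruetConst (n : ℕ) (t : ℝ) : ℝ :=
  exp (-((n : ℝ) - 1) ^ 2 * t / 8) / (π * (2 * π) ^ ((n : ℝ) / 2) * sqrt t) *
    Gamma (((n : ℝ) + 1) / 2)

theorem gruet_eq_gruetConst_mul (n : ℕ) (t ρ : ℝ) :
    gruet n t ρ = gruetConst n t * gruetIntegral (((n : ℝ) + 1) / 2) t ρ :=
  rfl

lemma one_le_cosh_add_cosh (b ρ : ℝ) : 1 ≤ cosh b + cosh ρ := by
  linarith [one_le_cosh b, cosh_pos ρ]

lemma abs_sinh_le_cosh (x : ℝ) : |sinh x| ≤ cosh x := by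
  rw [abs_sinh, ← cosh_abs]
  exact (sinh_lt_cosh _).le

lemma integrable_exp_sub_sq_div (c : ℝ) {a : ℝ} (ha : 0 < a) :
    Integrable fun b : ℝ => exp ((c - b ^ 2) / a) := by
  have h : (fun b : ℝ => exp ((c - b ^ 2) / a)) = fun b => exp (c / a) * exp (-a⁻¹ * b ^ 2) := by
    funext b
    rw [← exp_add]
    congr 1
    field_simp
    ring
  rw [h]
  exact (integrable_exp_neg_mul_sq (inv_pos.2 ha)).const_mul _

lemma abs_gruetWeight_div_le {p : ℝ} (hp : 1 ≤ p) (t b ρ : ℝ) :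
    |gruetWeight t b / (cosh b + cosh ρ) ^ p| ≤ exp ((π ^ 2 - b ^ 2) / (2 * t)) := by
  set u := cosh b + cosh ρ
  have hu : 1 ≤ u := one_le_cosh_add_cosh b ρ
  have hup : 0 < u ^ p := rpow_pos_of_pos (by linarith) p
  have hsinh : |sinh b| ≤ u ^ p := calc
    |sinh b| ≤ cosh b := abs_sinh_le_cosh b
    _ ≤ u := by linarith [cosh_pos ρ]
    _ ≤ u ^ p := by simpa using rpow_le_rpow_of_exponent_le hu hp
  rw [abs_div, abs_of_pos hup, div_le_iff₀ hup, gruetWeight, abs_mul, abs_mul, abs_exp]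
  calc exp ((π ^ 2 - b ^ 2) / (2 * t)) * |sinh b| * |sin (π * b / t)|
      ≤ exp ((π ^ 2 - b ^ 2) / (2 * t)) * u ^ p * 1 := by
        gcongr
        exact abs_sin_le_one _
    _ = _ := mul_one _

lemma continuous_gruetWeight_div (t ρ p : ℝ) :
    Continuous fun b => gruetWeight t b / (cosh b + cosh ρ) ^ p := by
  have hpos (b : ℝ) : 0 < cosh b + cosh ρ := by linarith [one_le_cosh_add_cosh b ρ]
  refine Continuous.div (by unfold gruetWeight; fun_prop)
    ((continuous_cosh.add continuous_const).rpow_const fun b => Or.inl (hpos b).ne')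
    fun b => (rpow_pos_of_pos (hpos b) p).ne'

lemma integrable_gruetWeight_div {t p : ℝ} (ht : 0 < t) (hp : 1 ≤ p) (ρ : ℝ) :
    Integrable fun b => gruetWeight t b / (cosh b + cosh ρ) ^ p :=
  (integrable_exp_sub_sq_div (π ^ 2) (a := 2 * t) (by positivity)).mono
    (continuous_gruetWeight_div t ρ p).aestronglyMeasurable
    (.of_forall fun b => by
      simpa only [norm_eq_abs, abs_exp] using abs_gruetWeight_div_le hp t b ρ)

lemma hasDerivAt_gruetWeight_div (t b p ρ : ℝ) :
    HasDerivAt (fun ρ => gruetWeight t b / (cosh b + cosh ρ) ^ p)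
      (-p * sinh ρ * (gruetWeight t b / (cosh b + cosh ρ) ^ (p + 1))) ρ := by
  have hu : 0 < cosh b + cosh ρ := by linarith [one_le_cosh_add_cosh b ρ]
  have hup : 0 < (cosh b + cosh ρ) ^ p := rpow_pos_of_pos hu p
  have h := (hasDerivAt_const ρ (gruetWeight t b)).div
    (((hasDerivAt_cosh ρ).const_add (cosh b)).rpow_const (p := p) (Or.inl hu.ne')) hup.ne'
  refine h.congr_deriv ?_
  rw [rpow_add_one hu.ne', rpow_sub_one hu.ne']
  field_simp
  ring

theorem hasDerivAt_gruetIntegral {t p : ℝ} (ht : 0 < t) (hp : 1 ≤ p) (r : ℝ) :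
    HasDerivAt (gruetIntegral p t) (-p * sinh r * gruetIntegral (p + 1) t r) r := by
  have hbound : ∀ b, ∀ ρ ∈ Metric.ball r 1,
      ‖-p * sinh ρ * (gruetWeight t b / (cosh b + cosh ρ) ^ (p + 1))‖
        ≤ p * sinh (|r| + 1) * exp ((π ^ 2 - b ^ 2) / (2 * t)) := by
    intro b ρ hρ
    have hsinh : |sinh ρ| ≤ sinh (|r| + 1) := by
      rw [abs_sinh, sinh_le_sinh]
      have := abs_sub_abs_le_abs_sub ρ r
      linarith [Real.dist_eq ρ r ▸ Metric.mem_ball.1 hρ]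
    rw [norm_mul, norm_mul, norm_neg, norm_eq_abs, norm_eq_abs, norm_eq_abs,
      abs_of_nonneg (by linarith : 0 ≤ p)]
    gcongr
    exact abs_gruetWeight_div_le (by linarith) t b ρ
  have h := hasDerivAt_integral_of_dominated_loc_of_deriv_le (μ := volume.restrict (Ioi 0))
    (Metric.ball_mem_nhds r one_pos)
    (.of_forall fun ρ => (continuous_gruetWeight_div t ρ p).aestronglyMeasurable)
    (integrable_gruetWeight_div ht hp r).integrableOn
    ((continuous_gruetWeight_div t r (p + 1)).aestronglyMeasurable.const_mul _)
    (.of_forall hbound)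
    ((integrable_exp_sub_sq_div _ (by positivity)).integrableOn.const_mul _)
    (.of_forall fun b ρ _ => hasDerivAt_gruetWeight_div t b p ρ)
  rw [integral_const_mul] at h
  exact h.2

lemma cast_add_two_add_one_div_two (n : ℕ) :
    (((n + 2 : ℕ) : ℝ) + 1) / 2 = ((n : ℝ) + 1) / 2 + 1 := by
  push_cast
  ring

lemma gruetConst_add_two (n : ℕ) (t : ℝ) :
    gruetConst (n + 2) t = exp (-(n * t / 2)) / (2 * π) * (((n : ℝ) + 1) / 2) * gruetConst n t := by
  have hexp : -(((n + 2 : ℕ) : ℝ) - 1) ^ 2 * t / 8 = -(n * t / 2) + -((n : ℝ) - 1) ^ 2 * t / 8 := by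
    push_cast
    ring
  have hpow : ((n + 2 : ℕ) : ℝ) / 2 = (n : ℝ) / 2 + 1 := by
    push_cast
    ring
  rw [gruetConst, gruetConst, hexp, hpow, cast_add_two_add_one_div_two, exp_add, rpow_add_one (by positivity),
    Gamma_add_one (by positivity)]
  field_simp

theorem hasDerivAt_gruet {n : ℕ} (hn : 1 ≤ n) {t : ℝ} (ht : 0 < t) (r : ℝ) :
    HasDerivAt (gruet n t) (-(2 * π) * exp (n * t / 2) * sinh r * gruet (n + 2) t r) r := by
  have hp : 1 ≤ ((n : ℝ) + 1) / 2 := by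
    have : (1 : ℝ) ≤ n := by exact_mod_cast hn
    linarith
  have h := (hasDerivAt_gruetIntegral ht hp r).const_mul (gruetConst n t)
  refine h.congr_deriv ?_
  rw [gruet_eq_gruetConst_mul, gruetConst_add_two, cast_add_two_add_one_div_two, exp_neg]
  generalize gruetIntegral _ t r = I
  field_simp

/-- Milson's recursion between dimensions 2 and 4 for the Gruet kernels. -/
theorem milson_two_four (t r : ℝ) (ht : 0 < t) (hr : 0 < r) :
    HasDerivAt (fun ρ => gruet 2 t ρ)
      (-(2 * π) * Real.exp t * Real.sinh r * gruet 4 t r) r ∧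
    gruet 4 t r
      = -(Real.exp (-t) / (2 * π * Real.sinh r)) * deriv (fun ρ => gruet 2 t ρ) r := by
  have hderiv : HasDerivAt (fun ρ => gruet 2 t ρ)
      (-(2 * π) * exp t * sinh r * gruet 4 t r) r := by
    simpa using hasDerivAt_gruet (n := 2) (by norm_num) ht r
  have hsinh : sinh r ≠ 0 := (sinh_pos_iff.2 hr).ne'
  refine ⟨hderiv, ?_⟩
  rw [hderiv.deriv, exp_neg]
  field_simp
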